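/- Let 0 ≤ λ < α, let g: ℝ → (λ, α) be continuous, and let U ⊆ ℝ be open. If the lower right Dini derivative D₊g(x) lies in the interval [λ − g(x), α − g(x)] for all x ∈ U, then the upper right Dini derivative D⁺g(x) also lies in [λ − g(x), α − g(x)] for all x ∈ U. -/

import Mathlib

open Filter Topology

/-- Upper right Dini derivative as an `EReal`. -/
noncomputable def upperDini (f : ℝ → ℝ) (x : ℝ) : EReal :=
  limsup (fun ε : ℝ => (((f (x + ε) - f x) / ε : ℝ) : EReal)) (nhdsWithin 0 (Set.Ioi 0))

/-- Lower right Dini derivative as an `EReal`. -/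
noncomputable def lowerDini (f : ℝ → ℝ) (x : ℝ) : EReal :=
  liminf (fun ε : ℝ => (((f (x + ε) - f x) / ε : ℝ) : EReal)) (nhdsWithin 0 (Set.Ioi 0))

/-! For any continuous bound `f`, a lower right Dini derivative `D₊g ≤ f` on an open set forces
`D⁺g ≤ f` there. Given `M > f x`, `f < M` near `x`, so the comparison principle
`image_le_of_liminf_slope_right_lt_deriv_boundary'` keeps `g` below the line `g x + M (t - x)` on a
right neighbourhood of `x`; hence `D⁺g x ≤ M`. -/

open Set

lemma lowerDini_le_upperDini (g : ℝ → ℝ) (x : ℝ) : lowerDini g x ≤ upperDini g x :=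
  liminf_le_limsup

lemma frequently_slope_lt_of_lowerDini_lt {g : ℝ → ℝ} {x r : ℝ} (h : lowerDini g x < r) :
    ∃ᶠ z in 𝓝[>] x, slope g x z < r := by
  have hquot : ∃ᶠ ε in 𝓝[>] (0 : ℝ), (g (x + ε) - g x) / ε < r :=
    (frequently_lt_of_liminf_lt (by isBoundedDefault) h).mono fun _ => EReal.coe_lt_coe_iff.mp
  have hshift : Tendsto (x + ·) (𝓝[>] (0 : ℝ)) (𝓝[>] x) := by
    refine tendsto_nhdsWithin_of_tendsto_nhds_of_eventually_within _ ?_ ?_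
    · simpa using ((continuous_const_add x).tendsto 0).mono_left nhdsWithin_le_nhds
    · filter_upwards [self_mem_nhdsWithin] with ε (hε : 0 < ε)
      simpa using hε
  refine (frequently_map (m := (x + ·)).mpr (hquot.mono fun ε hε => ?_)).filter_mono hshift
  simpa [slope_def_field] using hε

lemma upperDini_le_of_eventually_le {g : ℝ → ℝ} {x M : ℝ}
    (h : ∀ᶠ ε in 𝓝[>] (0 : ℝ), g (x + ε) ≤ g x + M * ε) : upperDini g x ≤ M := by
  refine limsup_le_of_le (by isBoundedDefault) ?_
  filter_upwards [h, self_mem_nhdsWithin] with ε hε (hpos : 0 < ε)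
  rw [EReal.coe_le_coe_iff, div_le_iff₀ hpos]
  linarith

theorem upperDini_le_of_lowerDini_le {g f : ℝ → ℝ} {U : Set ℝ} (hg : ContinuousOn g U)
    (hf : ContinuousOn f U) (hU : IsOpen U) (hD : ∀ y ∈ U, lowerDini g y ≤ f y) :
    ∀ x ∈ U, upperDini g x ≤ f x := by
  intro x hx
  refine EReal.le_of_forall_lt_iff_le.mp fun M hM => ?_
  have hnhds : {y | y ∈ U ∧ f y < M} ∈ 𝓝 x :=
    inter_mem (hU.mem_nhds hx) ((hf.continuousAt (hU.mem_nhds hx)).eventually_lt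
      continuousAt_const (by exact_mod_cast hM))
  obtain ⟨u, hxu, hsub⟩ :=
    mem_nhdsGE_iff_exists_Icc_subset.mp (mem_nhdsWithin_of_mem_nhds hnhds)
  have hline : ∀ t ∈ Icc x u, g t ≤ g x + M * (t - x) := by
    refine image_le_of_liminf_slope_right_lt_deriv_boundary' (f' := f) (B' := fun _ => M)
      (hg.mono fun t ht => (hsub ht).1) (fun t ht r hr => ?_) (by simp) (by fun_prop)
      (fun t _ => ?_) (fun t ht _ => (hsub (Ico_subset_Icc_self ht)).2)
    · exact frequently_slope_lt_of_lowerDini_lt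
        ((hD t (hsub (Ico_subset_Icc_self ht)).1).trans_lt (by exact_mod_cast hr))
    · simpa using (((hasDerivAt_id t).sub_const x).const_mul M).const_add (g x) |>.hasDerivWithinAt
  apply upperDini_le_of_eventually_le
  filter_upwards [Ioc_mem_nhdsGT (sub_pos.mpr hxu)] with ε hε
  simpa using hline (x + ε) ⟨by linarith [hε.1], by linarith [hε.2]⟩

theorem stmt2_general (lam alp : ℝ)
    (g : ℝ → ℝ) (hg : Continuous g)
    (U : Set ℝ) (hU : IsOpen U)
    (h : ∀ x ∈ U, lowerDini g x ∈
      Set.Icc ((lam - g x : ℝ) : EReal) ((alp - g x : ℝ) : EReal)) :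
    ∀ x ∈ U, upperDini g x ∈
      Set.Icc ((lam - g x : ℝ) : EReal) ((alp - g x : ℝ) : EReal) := by
  have hupper := upperDini_le_of_lowerDini_le hg.continuousOn
    (continuous_const.sub hg).continuousOn hU fun y hy => (h y hy).2
  exact fun x hx => ⟨(h x hx).1.trans (lowerDini_le_upperDini g x), hupper x hx⟩

/-- If `0 ≤ λ < α`, `g : ℝ → (λ,α)` is continuous, `U` open, and the lower right Dini
derivative of `g` lies in `[λ − g(x), α − g(x)]` on `U`, then so does the upper right one. -/
theorem stmt2 (lam alp : ℝ) (hlam : 0 ≤ lam) (hla : lam < alp)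
    (g : ℝ → ℝ) (hg : Continuous g) (hrange : ∀ x, g x ∈ Set.Ioo lam alp)
    (U : Set ℝ) (hU : IsOpen U)
    (h : ∀ x ∈ U, lowerDini g x ∈
      Set.Icc ((lam - g x : ℝ) : EReal) ((alp - g x : ℝ) : EReal)) :
    ∀ x ∈ U, upperDini g x ∈
      Set.Icc ((lam - g x : ℝ) : EReal) ((alp - g x : ℝ) : EReal) :=
  stmt2_general lam alp g hg U hU h
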